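/- In the second-price auction example with bidder values v_1, v_2 independent uniform on [1,2] and bids in {0,1,2}, the symmetric strategy profile b_i*(v_i) = 1 for v_i ∈ [1, 3/2) and b_i*(v_i) = 2 for v_i ∈ [3/2, 2], for i = 1, 2, is a perfect monotone equilibrium. -/

import Mathlib

/-!
Statement 19 (Fact `claim-2nd`): in the second-price auction example with values independent
and uniform on [1,2] and bids in {0,1,2}, the symmetric cutoff profile (bid 1 on [1, 3/2),
bid 2 on [3/2, 2]) is a perfect monotone equilibrium.
-/

open MeasureTheory Filter Metric

namespace MonotonePerfection

noncomputable section

/-- The bid space {0, 1, 2}. -/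
abbrev Bid3 : Type := {b : ℕ // b ≤ 2}

/-- The value space [1, 2]. -/
abbrev TV : Type := ↥(Set.Icc (1:ℝ) 2)

/-- The uniform distribution on [1,2] (Lebesgue measure on an interval of length one). -/
noncomputable def μV : Measure TV := (volume : Measure ℝ).comap Subtype.val

/-- The Prohorov distance between two Borel measures. -/
noncomputable def prohorovDist {Ω : Type*} [MeasurableSpace Ω] [PseudoMetricSpace Ω]
    (μ ν : Measure Ω) : ℝ :=
  sInf {ε : ℝ |
    ∀ B : Set Ω, MeasurableSet B →
      μ B ≤ ν (Metric.thickening ε B) + ENNReal.ofReal ε ∧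
      ν B ≤ μ (Metric.thickening ε B) + ENNReal.ofReal ε}

/-- A mixed strategy. -/
def IsMixed (g : TV → Measure Bid3) : Prop :=
  (∀ t, IsProbabilityMeasure (g t)) ∧
  ∀ B : Set Bid3, MeasurableSet B → Measurable fun t => g t B

/-- A completely mixed strategy: every bid gets positive probability at every value. -/
def IsCompletelyMixed (g : TV → Measure Bid3) : Prop :=
  ∀ (t : TV) (a : Bid3), 0 < g t {a}

/-- The second-price auction payoff of a bidder with value `v` bidding `b` against the
opponent's bid `b'`: the higher bid wins and pays the opponent's bid; ties are broken by a
fair coin. -/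
noncomputable def spay (b b' : Bid3) (v : ℝ) : ℝ :=
  if b'.1 < b.1 then v - (b'.1 : ℝ)
  else if b.1 = b'.1 then (v - (b'.1 : ℝ)) / 2
  else 0

/-- A bidder's interim payoff against a mixed strategy of the opponent. -/
noncomputable def Vsp (b : Bid3) (v : TV) (g : TV → Measure Bid3) : ℝ :=
  ∫ v' : TV, ∫ b', spay b b' (v : ℝ) ∂(g v') ∂μV

/-- A bidder's best responses. -/
def BRsp (v : TV) (g : TV → Measure Bid3) : Set Bid3 :=
  {b | ∀ b', Vsp b' v g ≤ Vsp b v g}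

/-- Bayesian Nash equilibrium of the second-price auction example. -/
def IsBNEsp (s1 s2 : TV → Bid3) : Prop :=
  (∀ᵐ v1 ∂μV, s1 v1 ∈ BRsp v1 fun v => Measure.dirac (s2 v)) ∧
  (∀ᵐ v2 ∂μV, s2 v2 ∈ BRsp v2 fun v => Measure.dirac (s1 v))

/-- A perfect strategy profile of the second-price auction example. -/
def IsPerfectsp (s1 s2 : TV → Bid3) : Prop :=
  ∃ G1 G2 : ℕ → TV → Measure Bid3,
    (∀ k, IsMixed (G1 k) ∧ IsMixed (G2 k) ∧
      IsCompletelyMixed (G1 k) ∧ IsCompletelyMixed (G2 k)) ∧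
    (∀ᵐ v1 ∂μV,
      Filter.Tendsto (fun k => prohorovDist (G1 k v1) (Measure.dirac (s1 v1)))
        Filter.atTop (nhds 0) ∧
      Filter.Tendsto (fun k => Metric.infDist (s1 v1) (BRsp v1 (G2 k)))
        Filter.atTop (nhds 0)) ∧
    (∀ᵐ v2 ∂μV,
      Filter.Tendsto (fun k => prohorovDist (G2 k v2) (Measure.dirac (s2 v2)))
        Filter.atTop (nhds 0) ∧
      Filter.Tendsto (fun k => Metric.infDist (s2 v2) (BRsp v2 (G1 k)))
        Filter.atTop (nhds 0))

/-- The symmetric cutoff strategy: bid 1 on [1, 3/2), bid 2 on [3/2, 2]. -/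
noncomputable def bstar (v : TV) : Bid3 :=
  if (v : ℝ) < 3/2 then ⟨1, by norm_num⟩ else ⟨2, by norm_num⟩

set_option linter.dupNamespace false

abbrev B0 : Bid3 := ⟨0, by norm_num⟩
abbrev B1 : Bid3 := ⟨1, by norm_num⟩
abbrev B2 : Bid3 := ⟨2, by norm_num⟩

instance : Fintype Bid3 := Fintype.subtype ({0,1,2} : Finset ℕ) (by intro x; simp; omega)

instance : IsProbabilityMeasure μV := by
  constructor
  rw [μV, (MeasurableEmbedding.subtype_coe measurableSet_Icc).comap_apply,
    Subtype.coe_image_univ, Real.volume_Icc]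
  norm_num

lemma integral_cutoff (A B : ℝ) :
    ∫ v' : TV, (if (v' : ℝ) < 3/2 then A else B) ∂μV = (A + B) / 2 := by
  have h := integral_subtype_comap (μ := (volume : Measure ℝ)) (s := Set.Icc (1:ℝ) 2)
      measurableSet_Icc (fun x : ℝ => if x < 3/2 then A else B)
  rw [show μV = (volume : Measure ℝ).comap Subtype.val from rfl, h]
  have hsplit : Set.Icc (1:ℝ) 2 = Set.Ico 1 (3/2) ∪ Set.Icc (3/2) 2 :=
    (Set.Ico_union_Icc_eq_Icc (by norm_num) (by norm_num)).symm
  have hd : Disjoint (Set.Ico (1:ℝ) (3/2)) (Set.Icc (3/2) 2) := by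
    rw [Set.disjoint_left]; rintro x ⟨_, h2⟩ ⟨h3, _⟩; linarith
  have hi1 : IntegrableOn (fun x : ℝ => if x < 3/2 then A else B) (Set.Ico 1 (3/2)) := by
    apply Integrable.congr (f := fun _ : ℝ => A)
    · exact integrableOn_const (by rw [Real.volume_Ico]; exact ENNReal.ofReal_ne_top)
    · filter_upwards [ae_restrict_mem measurableSet_Ico] with x hx
      rw [if_pos hx.2]
  have hi2 : IntegrableOn (fun x : ℝ => if x < 3/2 then A else B) (Set.Icc (3/2) 2) := by
    apply Integrable.congr (f := fun _ : ℝ => B)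
    · exact integrableOn_const (by rw [Real.volume_Icc]; exact ENNReal.ofReal_ne_top)
    · filter_upwards [ae_restrict_mem measurableSet_Icc] with x hx
      rw [if_neg (by push_neg; exact hx.1)]
  rw [hsplit, setIntegral_union hd measurableSet_Icc hi1 hi2]
  rw [setIntegral_congr_fun measurableSet_Ico (g := fun _ => A) (fun x hx => if_pos hx.2),
      setIntegral_congr_fun measurableSet_Icc (g := fun _ => B)
        (fun x hx => if_neg (by push_neg; exact hx.1)),
      setIntegral_const, setIntegral_const, Real.volume_real_Ico_of_le (by norm_num),
    Real.volume_real_Icc_of_le (by norm_num)]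
  norm_num; ring

def Gm (ε : ℝ) (t : TV) : Measure Bid3 :=
  ENNReal.ofReal (1 - 3*ε) • Measure.dirac (bstar t)
    + ENNReal.ofReal ε • (Measure.dirac B0 + Measure.dirac B1 + Measure.dirac B2)

lemma fin_smul_dirac (c : ℝ) (a : Bid3) :
    IsFiniteMeasure (ENNReal.ofReal c • Measure.dirac a) := by
  constructor
  rw [Measure.smul_apply, smul_eq_mul, measure_univ, mul_one]
  exact ENNReal.ofReal_lt_top

lemma integral_Gm (ε : ℝ) (hε0 : 0 ≤ ε) (hε1 : 3*ε ≤ 1) (f : Bid3 → ℝ) (t : TV) :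
    ∫ b', f b' ∂(Gm ε t)
      = (1 - 3*ε) * f (bstar t) + ε * (f B0 + f B1 + f B2) := by
  haveI h1 := fin_smul_dirac (1 - 3*ε) (bstar t)
  haveI h2 : IsFiniteMeasure
      (ENNReal.ofReal ε • (Measure.dirac B0 + Measure.dirac B1 + Measure.dirac B2) :
        Measure Bid3) := by
    constructor
    rw [Measure.smul_apply, smul_eq_mul]
    exact ENNReal.mul_lt_top ENNReal.ofReal_lt_top (measure_lt_top _ _)
  rw [Gm, integral_add_measure .of_finite .of_finite, integral_smul_measure,
    integral_smul_measure, integral_add_measure .of_finite .of_finite,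
    integral_add_measure .of_finite .of_finite, integral_dirac, integral_dirac,
    integral_dirac, integral_dirac, smul_eq_mul, smul_eq_mul,
    ENNReal.toReal_ofReal (by linarith), ENNReal.toReal_ofReal hε0]

lemma Vsp_Gm (ε : ℝ) (hε0 : 0 ≤ ε) (hε1 : 3*ε ≤ 1) (b : Bid3) (v : TV) :
    Vsp b v (Gm ε) = (1 - 3*ε) * ((spay b B1 (v:ℝ) + spay b B2 (v:ℝ))/2)
      + ε * (spay b B0 (v:ℝ) + spay b B1 (v:ℝ) + spay b B2 (v:ℝ)) := by
  have key : ∀ v' : TV, ∫ b', spay b b' (v:ℝ) ∂(Gm ε v')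
      = if (v' : ℝ) < 3/2
        then (1 - 3*ε) * spay b B1 (v:ℝ)
          + ε * (spay b B0 (v:ℝ) + spay b B1 (v:ℝ) + spay b B2 (v:ℝ))
        else (1 - 3*ε) * spay b B2 (v:ℝ)
          + ε * (spay b B0 (v:ℝ) + spay b B1 (v:ℝ) + spay b B2 (v:ℝ)) := by
    intro v'
    rw [integral_Gm ε hε0 hε1, bstar]
    split_ifs <;> rfl
  rw [Vsp]
  simp only [key]
  rw [integral_cutoff]
  ring

lemma bstar_BR (ε : ℝ) (hε0 : 0 ≤ ε) (hε1 : 3*ε ≤ 1) (v : TV) :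
    bstar v ∈ BRsp v (Gm ε) := by
  intro b'
  have hv1 : (1:ℝ) ≤ (v:ℝ) := v.2.1
  have hv2 : (v:ℝ) ≤ 2 := v.2.2
  rw [Vsp_Gm ε hε0 hε1, Vsp_Gm ε hε0 hε1]
  obtain ⟨n, hn⟩ := b'
  rw [bstar]
  interval_cases n <;> split_ifs with hv <;>
    simp only [spay] <;> norm_num <;> nlinarith

lemma Gm_zero : (fun t => Measure.dirac (bstar t)) = Gm 0 := by
  funext t
  simp [Gm]

lemma bstar_BNE : IsBNEsp bstar bstar := by
  constructor <;>
  · apply ae_of_all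
    intro v
    rw [Gm_zero]
    exact bstar_BR 0 le_rfl (by norm_num) v

lemma measurable_bstar : Measurable bstar := by
  unfold bstar
  exact Measurable.ite
    (measurable_subtype_coe (measurableSet_Iio (a := (3/2 : ℝ))))
    measurable_const measurable_const

lemma Gm_apply (ε : ℝ) (t : TV) (B : Set Bid3) (hB : MeasurableSet B) :
    Gm ε t B = ENNReal.ofReal (1 - 3*ε) * B.indicator 1 (bstar t)
      + ENNReal.ofReal ε *
        (B.indicator 1 B0 + B.indicator 1 B1 + B.indicator 1 B2) := by
  rw [Gm, Measure.add_apply, Measure.smul_apply, Measure.smul_apply, smul_eq_mul,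
    smul_eq_mul, Measure.add_apply, Measure.add_apply,
    Measure.dirac_apply' _ hB, Measure.dirac_apply' _ hB, Measure.dirac_apply' _ hB,
    Measure.dirac_apply' _ hB]

lemma Gm_prob (ε : ℝ) (hε0 : 0 ≤ ε) (hε1 : 3*ε ≤ 1) (t : TV) :
    IsProbabilityMeasure (Gm ε t) := by
  constructor
  rw [Gm_apply ε t _ MeasurableSet.univ]
  simp only [Set.indicator_univ, Pi.one_apply, mul_one]
  have h3 : (1 + 1 + 1 : ENNReal) = ENNReal.ofReal 3 := by norm_num
  rw [h3, ← ENNReal.ofReal_mul hε0, ← ENNReal.ofReal_add (by linarith) (by linarith)]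
  norm_num
  ring

lemma Gm_mixed (ε : ℝ) (hε0 : 0 ≤ ε) (hε1 : 3*ε ≤ 1) : IsMixed (Gm ε) := by
  refine ⟨Gm_prob ε hε0 hε1, fun B hB => ?_⟩
  simp only [Gm_apply ε _ B hB]
  apply Measurable.add _ measurable_const
  exact (((measurable_one.indicator hB).comp measurable_bstar).const_mul _)

lemma Gm_cm (ε : ℝ) (hε0 : 0 < ε) : IsCompletelyMixed (Gm ε) := by
  intro t a
  rw [Gm_apply ε t _ (measurableSet_singleton a)]
  have ha : (1:ENNReal) ≤ ({a} : Set Bid3).indicator 1 B0 + ({a} : Set Bid3).indicator 1 B1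
      + ({a} : Set Bid3).indicator 1 B2 := by
    obtain ⟨n, hn⟩ := a
    interval_cases n <;> simp
  refine lt_of_lt_of_le (lt_of_lt_of_le ?_ (mul_le_mul_right ha _)) le_add_self
  rw [mul_one]
  exact ENNReal.ofReal_pos.mpr hε0

lemma prohorov_mem (ε : ℝ) (hε0 : 0 < ε) (hε1 : 3*ε ≤ 1) (t : TV) :
    (3*ε) ∈ {r : ℝ |
      ∀ B : Set Bid3, MeasurableSet B →
        Gm ε t B ≤ Measure.dirac (bstar t) (Metric.thickening r B) + ENNReal.ofReal r ∧
        Measure.dirac (bstar t) B ≤ Gm ε t (Metric.thickening r B) + ENNReal.ofReal r} := by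
  intro B hB
  haveI := Gm_prob ε hε0.le hε1 t
  have hsub : B ⊆ Metric.thickening (3*ε) B := self_subset_thickening (by linarith) B
  by_cases hmem : bstar t ∈ B
  · constructor
    · calc Gm ε t B ≤ 1 := prob_le_one
        _ ≤ _ := by
            rw [Measure.dirac_apply_of_mem (hsub hmem)]
            exact le_add_right le_rfl
    · have h1 : ENNReal.ofReal (1 - 3*ε) ≤ Gm ε t (Metric.thickening (3*ε) B) := by
        have : ENNReal.ofReal (1 - 3*ε) ≤ Gm ε t B := by
          rw [Gm_apply ε t B hB, Set.indicator_of_mem hmem, Pi.one_apply, mul_one]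
          exact le_add_right le_rfl
        exact this.trans (measure_mono hsub)
      calc Measure.dirac (bstar t) B ≤ 1 := prob_le_one
        _ = ENNReal.ofReal (1 - 3*ε) + ENNReal.ofReal (3*ε) := by
            rw [← ENNReal.ofReal_add (by linarith) (by linarith)]
            norm_num
        _ ≤ _ := add_le_add h1 le_rfl
  · constructor
    · have : Gm ε t B ≤ ENNReal.ofReal (3*ε) := by
        rw [Gm_apply ε t B hB, Set.indicator_of_notMem hmem, mul_zero, zero_add]
        have hle : ∀ x : Bid3, B.indicator (1 : Bid3 → ENNReal) x ≤ 1 := fun x =>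
          Set.indicator_le_self' (fun _ _ => zero_le_one) x
        calc ENNReal.ofReal ε *
            (B.indicator 1 B0 + B.indicator 1 B1 + B.indicator 1 B2)
            ≤ ENNReal.ofReal ε * 3 := by
              refine mul_le_mul_right ?_ _
              calc B.indicator 1 B0 + B.indicator 1 B1 + B.indicator 1 B2
                  ≤ 1 + 1 + 1 := add_le_add (add_le_add (hle B0) (hle B1)) (hle B2)
                _ = 3 := by norm_num
          _ = ENNReal.ofReal (3*ε) := by
              rw [show (3:ENNReal) = ENNReal.ofReal 3 by norm_num,
                ← ENNReal.ofReal_mul hε0.le]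
              ring_nf
      exact this.trans (le_add_left le_rfl)
    · rw [Measure.dirac_apply' _ hB, Set.indicator_of_notMem hmem]
      exact zero_le

lemma prohorov_bound (ε : ℝ) (hε0 : 0 < ε) (hε1 : 3*ε ≤ 1) (t : TV) :
    0 ≤ prohorovDist (Gm ε t) (Measure.dirac (bstar t)) ∧
    prohorovDist (Gm ε t) (Measure.dirac (bstar t)) ≤ 3*ε := by
  haveI := Gm_prob ε hε0.le hε1 t
  have hpos : ∀ r ∈ {r : ℝ |
      ∀ B : Set Bid3, MeasurableSet B →
        Gm ε t B ≤ Measure.dirac (bstar t) (Metric.thickening r B) + ENNReal.ofReal r ∧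
        Measure.dirac (bstar t) B ≤ Gm ε t (Metric.thickening r B) + ENNReal.ofReal r},
      (0:ℝ) ≤ r := by
    intro r hr
    by_contra hneg
    push_neg at hneg
    have h := (hr Set.univ MeasurableSet.univ).1
    rw [Metric.thickening_of_nonpos hneg.le, measure_univ, measure_empty,
      ENNReal.ofReal_of_nonpos hneg.le, add_zero] at h
    exact (by norm_num : ¬ ((1:ENNReal) ≤ 0)) h
  constructor
  · exact le_csInf ⟨3*ε, prohorov_mem ε hε0 hε1 t⟩ hpos
  · exact csInf_le ⟨0, hpos⟩ (prohorov_mem ε hε0 hε1 t)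

lemma bstar_monotone : Monotone bstar := by
  intro a b hab
  have : (a:ℝ) ≤ (b:ℝ) := hab
  unfold bstar
  split_ifs with h1 h2 h3
  · exact le_rfl
  · exact Subtype.mk_le_mk.mpr (by norm_num)
  · exact absurd (lt_of_le_of_lt this h3) h1
  · exact le_rfl

/-- **Fact.**  The symmetric profile (bstar, bstar) is a perfect monotone equilibrium of the
second-price auction example. -/
theorem secondPriceExample_perfect_monotone_equilibrium :
    Monotone bstar ∧ IsBNEsp bstar bstar ∧ IsPerfectsp bstar bstar := by
  refine ⟨bstar_monotone, bstar_BNE, ?_⟩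
  have hε0 : ∀ k : ℕ, 0 < 1 / (3 * ((k:ℝ) + 1)) := fun k => by positivity
  have hε1 : ∀ k : ℕ, 3 * (1 / (3 * ((k:ℝ) + 1))) ≤ 1 := fun k => by
    rw [mul_one_div, div_le_one (by positivity)]
    nlinarith [Nat.cast_nonneg (α := ℝ) k]
  refine ⟨fun k => Gm (1 / (3 * ((k:ℝ) + 1))), fun k => Gm (1 / (3 * ((k:ℝ) + 1))),
    fun k => ⟨Gm_mixed _ (hε0 k).le (hε1 k), Gm_mixed _ (hε0 k).le (hε1 k),
      Gm_cm _ (hε0 k), Gm_cm _ (hε0 k)⟩, ?_, ?_⟩ <;>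
  · apply ae_of_all
    intro v
    constructor
    · have h3 : Tendsto (fun k : ℕ => 3 * (1 / (3 * ((k:ℝ) + 1)))) atTop (nhds 0) := by
        have heq : (fun k : ℕ => 3 * (1 / (3 * ((k:ℝ) + 1))))
            = fun k : ℕ => 1 / ((k:ℝ) + 1) := by
          funext k; field_simp
        rw [heq]
        exact tendsto_one_div_add_atTop_nhds_zero_nat
      exact squeeze_zero (fun k => (prohorov_bound _ (hε0 k) (hε1 k) v).1)
        (fun k => (prohorov_bound _ (hε0 k) (hε1 k) v).2) h3
    · have hz : ∀ k : ℕ,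
          Metric.infDist (bstar v) (BRsp v (Gm (1 / (3 * ((k:ℝ) + 1))))) = 0 :=
        fun k => Metric.infDist_zero_of_mem (bstar_BR _ (hε0 k).le (hε1 k) v)
      simp only [hz]
      exact tendsto_const_nhds


end

end MonotonePerfection
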